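/- arXiv:1110.6821 — 4 statements merged into one kernel-verified Lean document; each statement's English description precedes it below -/
import Mathlib

section
/- If 𝔊 is an induced Hoffman subgraph of a Hoffman graph 𝔥, then λ_min(𝔊) ≥ λ_min(𝔥). In particular, if Γ is the slim subgraph of 𝔥 (the subgraph induced on all slim vertices), then the smallest adjacency eigenvalue of Γ is at least λ_min(𝔥). -/
attribute [local instance] Classical.propDecidable

open scoped RealInnerProductSpace

/-- A Hoffman graph: a graph together with a labeling of its vertices as fat or slim,
such that every fat vertex has a slim neighbor and fat vertices are pairwise nonadjacent. -/
structure HoffmanGraph (V : Type*) where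
  graph : SimpleGraph V
  IsFat : V → Prop
  fat_not_adj : ∀ {x y : V}, IsFat x → IsFat y → ¬ graph.Adj x y
  fat_slim_nbr : ∀ {x : V}, IsFat x → ∃ y : V, ¬ IsFat y ∧ graph.Adj x y

namespace HoffmanGraph

variable {V : Type*}

/-- A vertex is slim if it is not fat. -/
def IsSlim (H : HoffmanGraph V) (x : V) : Prop := ¬ H.IsFat x

/-- The type of slim vertices. -/
abbrev Slim (H : HoffmanGraph V) := {v : V // H.IsSlim v}

/-- The number of fat neighbors of a vertex. -/
noncomputable def fatDeg (H : HoffmanGraph V) (x : V) : ℕ :=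
  {f : V | H.IsFat f ∧ H.graph.Adj x f}.ncard

/-- The number of common fat neighbors of two vertices. -/
noncomputable def commonFat (H : HoffmanGraph V) (x y : V) : ℕ :=
  {f : V | H.IsFat f ∧ H.graph.Adj x f ∧ H.graph.Adj y f}.ncard

lemma commonFat_comm (H : HoffmanGraph V) (x y : V) :
    H.commonFat x y = H.commonFat y x := by
  unfold commonFat
  congr 1
  ext f
  simp only [Set.mem_setOf_eq]
  tauto

/-- A Hoffman graph is fat if every slim vertex has a fat neighbor. -/
def IsFatGraph (H : HoffmanGraph V) : Prop :=
  ∀ x, H.IsSlim x → ∃ f, H.IsFat f ∧ H.graph.Adj x f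

/-- A representation of norm `m`. -/
def IsRep (H : HoffmanGraph V) (m : ℝ) {E : Type*} [NormedAddCommGroup E]
    [InnerProductSpace ℝ E] (φ : V → E) : Prop :=
  (∀ x, H.IsSlim x → ⟪φ x, φ x⟫ = m) ∧
  (∀ x, H.IsFat x → ⟪φ x, φ x⟫ = 1) ∧
  (∀ x y, H.graph.Adj x y → ⟪φ x, φ y⟫ = 1) ∧
  (∀ x y, x ≠ y → ¬ H.graph.Adj x y → ⟪φ x, φ y⟫ = 0)

/-- A reduced representation of norm `m` (only the values on slim vertices matter). -/
def IsReducedRep (H : HoffmanGraph V) (m : ℝ) {E : Type*} [NormedAddCommGroup E]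
    [InnerProductSpace ℝ E] (ψ : V → E) : Prop :=
  (∀ x, H.IsSlim x → ⟪ψ x, ψ x⟫ = m - H.fatDeg x) ∧
  (∀ x y, H.IsSlim x → H.IsSlim y → H.graph.Adj x y → ⟪ψ x, ψ y⟫ = 1 - H.commonFat x y) ∧
  (∀ x y, H.IsSlim x → H.IsSlim y → x ≠ y → ¬ H.graph.Adj x y →
    ⟪ψ x, ψ y⟫ = - (H.commonFat x y : ℝ))

/-- The matrix B(𝔥) = A_s − C Cᵀ, indexed by the slim vertices. -/
noncomputable def matrixB (H : HoffmanGraph V) : Matrix H.Slim H.Slim ℝ :=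
  fun x y => (if H.graph.Adj x.1 y.1 then (1 : ℝ) else 0) - (H.commonFat x.1 y.1 : ℝ)

/-- The smallest eigenvalue of a Hoffman graph. -/
noncomputable def lambdaMin (H : HoffmanGraph V) [Fintype V] : ℝ :=
  sInf (spectrum ℝ H.matrixB)

/-- A subset of the vertices induces a Hoffman graph iff every fat vertex of it retains
a slim neighbor inside it. -/
def IsGoodSubset (H : HoffmanGraph V) (S : Set V) : Prop :=
  ∀ x ∈ S, H.IsFat x → ∃ y ∈ S, ¬ H.IsFat y ∧ H.graph.Adj x y

/-- The induced Hoffman subgraph on a good subset. -/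
def induce (H : HoffmanGraph V) (S : Set V) (hS : H.IsGoodSubset S) : HoffmanGraph S where
  graph := H.graph.induce S
  IsFat := fun x => H.IsFat x.1
  fat_not_adj := by
    intro x y hx hy hadj
    exact H.fat_not_adj hx hy hadj
  fat_slim_nbr := by
    rintro ⟨x, hxS⟩ hx
    obtain ⟨y, hyS, hy, hadj⟩ := hS x hxS hx
    exact ⟨⟨y, hyS⟩, hy, hadj⟩

/-- An (abstract) induced Hoffman subgraph relation between Hoffman graphs. -/
def IsInducedSubgraphOf {V₁ V₂ : Type*} (H₁ : HoffmanGraph V₁) (H₂ : HoffmanGraph V₂) : Prop :=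
  ∃ e : V₁ ↪ V₂, (∀ x y, H₂.graph.Adj (e x) (e y) ↔ H₁.graph.Adj x y) ∧
    (∀ x, H₂.IsFat (e x) ↔ H₁.IsFat x)

/-- Isomorphism of Hoffman graphs. -/
def IsIsoTo {V₁ V₂ : Type*} (H₁ : HoffmanGraph V₁) (H₂ : HoffmanGraph V₂) : Prop :=
  ∃ e : V₁ ≃ V₂, (∀ x y, H₂.graph.Adj (e x) (e y) ↔ H₁.graph.Adj x y) ∧
    (∀ x, H₂.IsFat (e x) ↔ H₁.IsFat x)

/-- `H` is the sum of its induced subgraphs on `W₁` and `W₂`. -/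
structure IsSum (H : HoffmanGraph V) (W₁ W₂ : Set V) : Prop where
  nonempty₁ : W₁.Nonempty
  nonempty₂ : W₂.Nonempty
  good₁ : H.IsGoodSubset W₁
  good₂ : H.IsGoodSubset W₂
  union_eq : W₁ ∪ W₂ = Set.univ
  slim_partition : ∀ v, H.IsSlim v → (v ∈ W₁ ↔ v ∉ W₂)
  fat_closed₁ : ∀ x ∈ W₁, H.IsSlim x → ∀ f, H.IsFat f → H.graph.Adj x f → f ∈ W₁
  fat_closed₂ : ∀ x ∈ W₂, H.IsSlim x → ∀ f, H.IsFat f → H.graph.Adj x f → f ∈ W₂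
  common_le : ∀ x ∈ W₁, ∀ y ∈ W₂, H.IsSlim x → H.IsSlim y → H.commonFat x y ≤ 1
  common_iff : ∀ x ∈ W₁, ∀ y ∈ W₂, H.IsSlim x → H.IsSlim y →
    (H.commonFat x y = 1 ↔ H.graph.Adj x y)

/-- `H` is decomposable if it is the sum of two nonempty induced Hoffman subgraphs. -/
def Decomposable (H : HoffmanGraph V) : Prop := ∃ W₁ W₂ : Set V, H.IsSum W₁ W₂

def Indecomposable (H : HoffmanGraph V) : Prop := ¬ H.Decomposable

/-- `H` is the sum of the family of its induced subgraphs on `W i`. -/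
structure IsSumFamily (H : HoffmanGraph V) {n : ℕ} (W : Fin n → Set V) : Prop where
  nonempty : ∀ i, (W i).Nonempty
  good : ∀ i, H.IsGoodSubset (W i)
  union_eq : ⋃ i, W i = Set.univ
  slim_mem_unique : ∀ v, H.IsSlim v → ∃! i, v ∈ W i
  fat_closed : ∀ i, ∀ x ∈ W i, H.IsSlim x → ∀ f, H.IsFat f → H.graph.Adj x f → f ∈ W i
  common_le : ∀ i j, i ≠ j → ∀ x ∈ W i, ∀ y ∈ W j, H.IsSlim x → H.IsSlim y →
    H.commonFat x y ≤ 1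
  common_iff : ∀ i j, i ≠ j → ∀ x ∈ W i, ∀ y ∈ W j, H.IsSlim x → H.IsSlim y →
    (H.commonFat x y = 1 ↔ H.graph.Adj x y)

/-- Attach a new fat vertex (the `none` vertex) adjacent exactly to the slim vertices in `S`. -/
def attachFat (H : HoffmanGraph V) (S : Set V) (hne : S.Nonempty)
    (hslim : ∀ v ∈ S, H.IsSlim v) : HoffmanGraph (Option V) where
  graph := {
    Adj := fun a b =>
      match a, b with
      | none, none => False
      | none, some v => v ∈ S
      | some v, none => v ∈ S
      | some u, some v => H.graph.Adj u v
    symm := by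
      refine ⟨?_⟩
      rintro (_|u) (_|v) h
      · exact h.elim
      · exact h
      · exact h
      · exact h.symm
    loopless := by
      refine ⟨?_⟩
      rintro (_|u) h
      · exact h.elim
      · exact H.graph.loopless.irrefl u h }
  IsFat := fun a => match a with | none => True | some v => H.IsFat v
  fat_not_adj := by
    rintro (_|u) (_|v) hu hv h
    · exact h.elim
    · exact (hslim v h) hv
    · exact (hslim u h) hu
    · exact H.fat_not_adj hu hv h
  fat_slim_nbr := by
    rintro (_|u) hu
    · obtain ⟨s, hs⟩ := hne
      exact ⟨some s, hslim s hs, hs⟩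
    · obtain ⟨y, hy, hadj⟩ := H.fat_slim_nbr hu
      exact ⟨some y, hy, hadj⟩

/-- `H` is `μ`-saturated: it has smallest eigenvalue at least `μ` and no fat vertex can be
attached while keeping the smallest eigenvalue at least `μ`. -/
def IsSaturated (H : HoffmanGraph V) [Fintype V] (μ : ℝ) : Prop :=
  μ ≤ H.lambdaMin ∧
  ∀ (S : Set V) (hne : S.Nonempty) (hslim : ∀ v ∈ S, H.IsSlim v),
    ¬ (μ ≤ (H.attachFat S hne hslim).lambdaMin)

/-- The special graph `S⁻(𝔥)`: slim vertices, adjacent when the inner product of their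
reduced representations is negative. -/
noncomputable def specialMinus (H : HoffmanGraph V) : SimpleGraph H.Slim where
  Adj x y := x ≠ y ∧
    ((H.graph.Adj x.1 y.1 ∧ (1 : ℝ) - (H.commonFat x.1 y.1 : ℝ) < 0) ∨
     (¬ H.graph.Adj x.1 y.1 ∧ -(H.commonFat x.1 y.1 : ℝ) < 0))
  symm := by
    refine ⟨?_⟩
    rintro x y ⟨hne, h⟩
    refine ⟨hne.symm, ?_⟩
    rw [H.commonFat_comm y.1 x.1]
    rcases h with ⟨ha, hl⟩ | ⟨ha, hl⟩
    · exact Or.inl ⟨ha.symm, hl⟩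
    · exact Or.inr ⟨fun hadj => ha hadj.symm, hl⟩
  loopless := ⟨fun x h => h.1 rfl⟩

/-- The special graph `S⁺(𝔥)`: slim vertices, adjacent when the inner product of their
reduced representations is positive. -/
noncomputable def specialPlus (H : HoffmanGraph V) : SimpleGraph H.Slim where
  Adj x y := x ≠ y ∧
    ((H.graph.Adj x.1 y.1 ∧ 0 < (1 : ℝ) - (H.commonFat x.1 y.1 : ℝ)) ∨
     (¬ H.graph.Adj x.1 y.1 ∧ 0 < -(H.commonFat x.1 y.1 : ℝ)))
  symm := by
    refine ⟨?_⟩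
    rintro x y ⟨hne, h⟩
    refine ⟨hne.symm, ?_⟩
    rw [H.commonFat_comm y.1 x.1]
    rcases h with ⟨ha, hl⟩ | ⟨ha, hl⟩
    · exact Or.inl ⟨ha.symm, hl⟩
    · exact Or.inr ⟨fun hadj => ha hadj.symm, hl⟩
  loopless := ⟨fun x h => h.1 rfl⟩

/-- The special graph `S(𝔥)`, the union of `S⁻(𝔥)` and `S⁺(𝔥)`. -/
noncomputable def special (H : HoffmanGraph V) : SimpleGraph H.Slim :=
  H.specialMinus ⊔ H.specialPlus

/-- `⟨S⟩_𝔥`: the set `S` together with all fat neighbors of its members. -/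
def closureSet (H : HoffmanGraph V) (S : Set V) : Set V :=
  S ∪ {f | H.IsFat f ∧ ∃ x ∈ S, H.graph.Adj x f}

/-- The Hoffman graph `𝔥^(t)` with one slim vertex (`none`) and `t` fat vertices. -/
def manyFat (t : ℕ) : HoffmanGraph (Option (Fin t)) where
  graph := {
    Adj := fun a b => (a = none ∧ b ≠ none) ∨ (a ≠ none ∧ b = none)
    symm := by
      refine ⟨?_⟩
      rintro a b (⟨h1, h2⟩ | ⟨h1, h2⟩)
      · exact Or.inr ⟨h2, h1⟩
      · exact Or.inl ⟨h2, h1⟩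
    loopless := by
      refine ⟨?_⟩
      rintro a (⟨h1, h2⟩ | ⟨h1, h2⟩)
      · exact h2 h1
      · exact h1 h2 }
  IsFat := fun a => a ≠ none
  fat_not_adj := by
    rintro a b ha hb (⟨h1, _⟩ | ⟨_, h1⟩)
    · exact ha h1
    · exact hb h1
  fat_slim_nbr := by
    intro a ha
    refine ⟨none, by simp, Or.inr ⟨ha, rfl⟩⟩

/-- An ordinary (slim) graph regarded as a Hoffman graph. -/
def ofSimple {W : Type*} (G : SimpleGraph W) : HoffmanGraph W where
  graph := G
  IsFat := fun _ => False
  fat_not_adj := by intro x y hx _ _; exact hx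
  fat_slim_nbr := by intro x hx; exact hx.elim

end HoffmanGraph
namespace HoffmanGraph

variable {V : Type*}

/-- The Hoffman graph obtained by replacing the fat vertices `f i` by slim cliques of
sizes `n i`, joining all neighbors of `f i` to all vertices of the `i`-th clique. -/
def blowup {k : ℕ} (H : HoffmanGraph V) (f : Fin k → V) (hf : ∀ i, H.IsFat (f i))
    (n : Fin k → ℕ) :
    HoffmanGraph ({v : V // v ∉ Set.range f} ⊕ (Σ i : Fin k, Fin (n i))) where
  graph := {
    Adj := fun a b =>
      match a, b with
      | .inl u, .inl v => H.graph.Adj u.1 v.1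
      | .inl u, .inr x => H.graph.Adj u.1 (f x.1)
      | .inr x, .inl v => H.graph.Adj (f x.1) v.1
      | .inr x, .inr y => x ≠ y ∧ x.1 = y.1
    symm := by
      refine ⟨?_⟩
      rintro (u|x) (v|y) h
      · exact h.symm
      · exact h.symm
      · exact h.symm
      · exact ⟨h.1.symm, h.2.symm⟩
    loopless := by
      refine ⟨?_⟩
      rintro (u|x) h
      · exact H.graph.loopless.irrefl _ h
      · exact h.1 rfl }
  IsFat := fun a => match a with | .inl u => H.IsFat u.1 | .inr _ => False
  fat_not_adj := by
    rintro (u|x) (v|y) hu hv h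
    · exact H.fat_not_adj hu hv h
    · exact hv
    · exact hu
    · exact hu
  fat_slim_nbr := by
    rintro (u|x) hu
    · obtain ⟨y, hy, hadj⟩ := H.fat_slim_nbr hu
      refine ⟨Sum.inl ⟨y, ?_⟩, hy, hadj⟩
      rintro ⟨i, rfl⟩
      exact hy (hf i)
    · exact hu.elim

/-- The slim graph obtained by replacing every fat vertex by a slim `n`-clique,
joining all neighbors of a fat vertex to all vertices of its clique. -/
def blowupAll (H : HoffmanGraph V) (n : ℕ) :
    HoffmanGraph (H.Slim ⊕ ({f : V // H.IsFat f} × Fin n)) where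
  graph := {
    Adj := fun a b =>
      match a, b with
      | .inl u, .inl v => H.graph.Adj u.1 v.1
      | .inl u, .inr x => H.graph.Adj u.1 x.1.1
      | .inr x, .inl v => H.graph.Adj x.1.1 v.1
      | .inr x, .inr y => x ≠ y ∧ x.1 = y.1
    symm := by
      refine ⟨?_⟩
      rintro (u|x) (v|y) h
      · exact h.symm
      · exact h.symm
      · exact h.symm
      · exact ⟨h.1.symm, h.2.symm⟩
    loopless := by
      refine ⟨?_⟩
      rintro (u|x) h
      · exact H.graph.loopless.irrefl _ h
      · exact h.1 rfl }
  IsFat := fun _ => False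
  fat_not_adj := by intro x y hx _; exact hx.elim
  fat_slim_nbr := by intro x hx; exact hx.elim

/-- The Hoffman graph of Example 4.2: slim vertices `ℤ/4ℤ` (the `inl`'s), fat vertices
`f_j` for `j ∈ ℤ/4ℤ` (the `inr`'s), with edges `{0,2}`, `{1,3}` and `{i, f_j}` for
`i = j` or `i = j + 1`. -/
def exampleA3tilde : HoffmanGraph (ZMod 4 ⊕ ZMod 4) where
  graph := {
    Adj := fun a b =>
      match a, b with
      | .inl i, .inl j => j = i + 2
      | .inl i, .inr j => i = j ∨ i = j + 1
      | .inr j, .inl i => i = j ∨ i = j + 1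
      | .inr _, .inr _ => False
    symm := by
      refine ⟨?_⟩
      have h4 : (2 : ZMod 4) + 2 = 0 := by decide
      rintro (i|i) (j|j) h
      · have h' : j = i + 2 := h
        subst h'
        show i = i + 2 + 2
        rw [add_assoc, h4, add_zero]
      · exact h
      · exact h
      · exact h.elim
    loopless := by
      refine ⟨?_⟩
      rintro (i|i) h
      · exact absurd (left_eq_add.mp h) (by decide)
      · exact h }
  IsFat := fun a => match a with | .inl _ => False | .inr _ => True
  fat_not_adj := by
    rintro (i|i) (j|j) hx hy h
    · exact hx
    · exact hx
    · exact hy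
    · exact h
  fat_slim_nbr := by
    rintro (i|i) hx
    · exact hx.elim
    · exact ⟨Sum.inl i, id, Or.inl rfl⟩

end HoffmanGraph

/-- The extended Dynkin graph `D̃₄`, i.e. the star `K_{1,4}`. -/
def tildeD4Graph : SimpleGraph (Fin 5) := SimpleGraph.fromRel (fun a _ => a = 0)

/-- The Dynkin graph `A_m`: the path on `m` vertices. -/
def dynkinA (m : ℕ) : SimpleGraph (Fin m) :=
  SimpleGraph.fromRel (fun i j => i.1 + 1 = j.1)

/-- The extended Dynkin graph `Ã_m`: the cycle on `m + 1` vertices. -/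
def tildeA (m : ℕ) : SimpleGraph (ZMod (m + 1)) :=
  SimpleGraph.fromRel (fun i j => i + 1 = j)

/-- The Dynkin graph `D_m`: the path `1 - 2 - ⋯ - (m-1)` with the extra vertex `0`
attached to the vertex `2`. -/
def dynkinD (m : ℕ) : SimpleGraph (Fin m) :=
  SimpleGraph.fromRel (fun i j => (1 ≤ i.1 ∧ i.1 + 1 = j.1) ∨ (i.1 = 0 ∧ j.1 = 2))

/-- The extended Dynkin graph `D̃_m` on `m + 1` vertices: the path `1 - 2 - ⋯ - (m-1)`
with the extra vertex `0` attached to `2` and the extra vertex `m` attached to `m - 2`. -/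
def tildeD (m : ℕ) : SimpleGraph (Fin (m + 1)) :=
  SimpleGraph.fromRel (fun i j =>
    (1 ≤ i.1 ∧ i.1 + 1 = j.1 ∧ j.1 ≤ m - 1) ∨ (i.1 = 0 ∧ j.1 = 2) ∨ (i.1 = m ∧ j.1 = m - 2))

/-!
Deleting slim vertices of a Hoffman graph passes to a principal submatrix of
`B(𝔥) = A_s - C Cᵀ`, while deleting fat vertices adds `C' C'ᵀ`, where `C'` is the block of `C`
belonging to the deleted fat vertices. Hence `B(𝔊) - B(𝔥)[S, S]` is positive semidefinite for
the slim vertex set `S` of `𝔊`. Since `λ_min(B) • 1 ≤ B` in the Loewner order and this passes to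
principal submatrices, `λ_min(𝔥) • 1 ≤ B(𝔊)`. The slim subgraph `Γ` is the case where every fat
vertex is deleted, and then `B(Γ)` is the adjacency matrix of `Γ`.
-/

open scoped MatrixOrder

namespace Matrix.IsHermitian

variable {n m : Type*} [Fintype n] [DecidableEq n] [Fintype m] [DecidableEq m]

lemma sInf_spectrum_eq_zero_of_isEmpty [IsEmpty n] {A : Matrix n n ℝ} (hA : A.IsHermitian) :
    sInf (spectrum ℝ A) = 0 := by
  rw [hA.spectrum_real_eq_range_eigenvalues, Set.range_eq_empty, Real.sInf_empty]

lemma le_sInf_spectrum_iff [Nonempty n] {A : Matrix n n ℝ} (hA : A.IsHermitian) {r : ℝ} :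
    r ≤ sInf (spectrum ℝ A) ↔ algebraMap ℝ (Matrix n n ℝ) r ≤ A := by
  rw [algebraMap_le_iff_le_spectrum hA.isSelfAdjoint, hA.spectrum_real_eq_range_eigenvalues]
  exact le_csInf_iff (Set.finite_range _).bddBelow (Set.range_nonempty _)

lemma sInf_spectrum_le_apply_self {A : Matrix n n ℝ} (hA : A.IsHermitian) (i : n) :
    sInf (spectrum ℝ A) ≤ A i i := by
  have : Nonempty n := ⟨i⟩
  have h := (hA.le_sInf_spectrum_iff).1 le_rfl
  simpa [algebraMap_eq_diagonal, sub_nonneg] using h.diag_nonneg (i := i)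

lemma sInf_spectrum_le_of_submatrix_le [Nonempty m] {B : Matrix n n ℝ} (hB : B.IsHermitian)
    {A : Matrix m m ℝ} (hA : A.IsHermitian) {e : m → n} (he : Function.Injective e)
    (hle : B.submatrix e e ≤ A) : sInf (spectrum ℝ B) ≤ sInf (spectrum ℝ A) := by
  have : Nonempty n := Nonempty.map e ‹_›
  set r := sInf (spectrum ℝ B)
  have hr : (algebraMap ℝ (Matrix n n ℝ) r).submatrix e e = algebraMap ℝ (Matrix m m ℝ) r := by
    simp [Algebra.algebraMap_eq_smul_one, submatrix_smul, submatrix_one _ he]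
  refine (hA.le_sInf_spectrum_iff).2 (le_trans ?_ hle)
  rw [le_iff, ← hr]
  exact ((hB.le_sInf_spectrum_iff).1 le_rfl).submatrix e

end Matrix.IsHermitian

namespace HoffmanGraph

open Matrix

variable {V : Type*} (H : HoffmanGraph V)

noncomputable def commonFatIn (T : Set V) (x y : V) : ℕ :=
  {f | f ∈ T ∧ H.IsFat f ∧ H.graph.Adj x f ∧ H.graph.Adj y f}.ncard

/-- The block `C` of the adjacency matrix restricted to the fat vertices in `T`, with rows indexed
by all vertices. -/
noncomputable def fatIncidence (T : Set V) : Matrix V V ℝ :=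
  of fun x f => if f ∈ T ∧ H.IsFat f ∧ H.graph.Adj x f then 1 else 0

lemma commonFatIn_univ : H.commonFatIn Set.univ = H.commonFat := by
  ext x y
  simp [commonFatIn, commonFat]

lemma commonFatIn_add_commonFatIn_compl [Finite V] (T : Set V) (x y : V) :
    H.commonFatIn T x y + H.commonFatIn Tᶜ x y = H.commonFat x y := by
  rw [commonFat, ← Set.ncard_inter_add_ncard_sdiff_eq_ncard _ T, commonFatIn, commonFatIn]
  congr 2 <;> ext f <;> simp [and_comm, and_assoc, and_left_comm]

lemma cast_commonFatIn [Fintype V] (T : Set V) (x y : V) :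
    (H.commonFatIn T x y : ℝ) = (H.fatIncidence T * (H.fatIncidence T)ᵀ) x y := by
  simp only [mul_apply, transpose_apply, fatIncidence, of_apply, ite_zero_mul_ite_zero, mul_one,
    Finset.sum_boole, commonFatIn, Set.ncard_eq_toFinset_card', Set.toFinset_ofPred]
  congr 3
  ext f
  tauto

lemma matrixB_isHermitian : H.matrixB.IsHermitian := by
  ext x y
  simp [matrixB, H.commonFat_comm y.1, SimpleGraph.adj_comm]

lemma lambdaMin_nonpos [Fintype V] : H.lambdaMin ≤ 0 := by
  rcases isEmpty_or_nonempty H.Slim with _ | ⟨⟨x⟩⟩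
  · exact H.matrixB_isHermitian.sInf_spectrum_eq_zero_of_isEmpty.le
  · calc H.lambdaMin ≤ H.matrixB x x := H.matrixB_isHermitian.sInf_spectrum_le_apply_self x
      _ = -H.commonFat x x := by simp [matrixB]
      _ ≤ 0 := by simp

lemma commonFatIn_range_eq_commonFat {W : Type*} {K : HoffmanGraph W} {e : W ↪ V}
    (hadj : ∀ x y, H.graph.Adj (e x) (e y) ↔ K.graph.Adj x y)
    (hfat : ∀ x, H.IsFat (e x) ↔ K.IsFat x)
    (x y : W) : H.commonFatIn (Set.range e) (e x) (e y) = K.commonFat x y := by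
  rw [commonFat, ← Set.ncard_image_of_injective _ e.injective, commonFatIn]
  congr 1
  ext f
  constructor
  · rintro ⟨⟨g, rfl⟩, hg⟩
    exact ⟨g, by simpa [hadj, hfat] using hg, rfl⟩
  · rintro ⟨g, hg, rfl⟩
    exact ⟨⟨g, rfl⟩, by simpa [hadj, hfat] using hg⟩

theorem IsInducedSubgraphOf.exists_submatrix_matrixB_le [Fintype V] {W : Type*}
    {K : HoffmanGraph W} (hK : K.IsInducedSubgraphOf H) :
    ∃ e : K.Slim → H.Slim, Function.Injective e ∧ H.matrixB.submatrix e e ≤ K.matrixB := by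
  obtain ⟨e, hadj, hfat⟩ := hK
  let e' : K.Slim → H.Slim := fun x => ⟨e x, (hfat x).not.2 x.2⟩
  refine ⟨e', fun x y h => Subtype.ext (e.injective (congrArg Subtype.val h)), ?_⟩
  set N := H.fatIncidence (Set.range e)ᶜ
  have hdiff : K.matrixB - H.matrixB.submatrix e' e' =
      (N * Nᵀ).submatrix (fun x : K.Slim => e x.1) (fun x => e x.1) := by
    ext x y
    simp only [Matrix.sub_apply, submatrix_apply, matrixB, hadj, N, e', ← cast_commonFatIn]
    rw [← H.commonFatIn_add_commonFatIn_compl (Set.range e),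
      commonFatIn_range_eq_commonFat H hadj hfat]
    push_cast
    ring
  rw [le_iff, hdiff, ← conjTranspose_eq_transpose_of_trivial]
  exact (posSemidef_self_mul_conjTranspose N).submatrix _

theorem submatrix_matrixB_le_adjMatrix_induce_slim [Fintype V] :
    H.matrixB.submatrix (fun v : {v | H.IsSlim v} => ⟨v.1, v.2⟩) (fun v => ⟨v.1, v.2⟩) ≤
      (H.graph.induce {v | H.IsSlim v}).adjMatrix ℝ := by
  set N := H.fatIncidence Set.univ
  have hdiff : (H.graph.induce {v | H.IsSlim v}).adjMatrix ℝ -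
      H.matrixB.submatrix (fun v => ⟨v.1, v.2⟩) (fun v => ⟨v.1, v.2⟩) =
      (N * Nᵀ).submatrix (fun v : {v | H.IsSlim v} => v.1) (fun v => v.1) := by
    ext x y
    simp [matrixB, N, ← cast_commonFatIn, commonFatIn_univ]
  rw [le_iff, hdiff, ← conjTranspose_eq_transpose_of_trivial]
  exact (posSemidef_self_mul_conjTranspose N).submatrix _

end HoffmanGraph

/-- Lemma 2.9: if `𝔊` is an induced Hoffman subgraph of `𝔥`, then
`λ_min(𝔊) ≥ λ_min(𝔥)`.  In particular the slim subgraph `Γ` of `𝔥` has smallest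
adjacency eigenvalue at least `λ_min(𝔥)`. -/
theorem lambdaMin_le_of_inducedSubgraph {V : Type} [Fintype V] (H : HoffmanGraph V) :
    (∀ (W : Type) [Fintype W], ∀ K : HoffmanGraph W,
      K.IsInducedSubgraphOf H → H.lambdaMin ≤ K.lambdaMin) ∧
    H.lambdaMin ≤ sInf (spectrum ℝ ((H.graph.induce {v | H.IsSlim v}).adjMatrix ℝ)) := by
  refine ⟨fun W _ K hK => ?_, ?_⟩
  · obtain ⟨e, he, hle⟩ := hK.exists_submatrix_matrixB_le
    -- without slim vertices the spectrum is empty and `λ_min = sInf ∅ = 0`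
    rcases isEmpty_or_nonempty K.Slim with _ | _
    · exact H.lambdaMin_nonpos.trans_eq
        K.matrixB_isHermitian.sInf_spectrum_eq_zero_of_isEmpty.symm
    · exact H.matrixB_isHermitian.sInf_spectrum_le_of_submatrix_le K.matrixB_isHermitian he hle
  · have hΓ : ((H.graph.induce {v | H.IsSlim v}).adjMatrix ℝ).IsHermitian :=
      Matrix.isHermitian_iff_isSymm.2 (SimpleGraph.isSymm_adjMatrix _)
    rcases isEmpty_or_nonempty {v | H.IsSlim v} with _ | _
    · exact H.lambdaMin_nonpos.trans_eq hΓ.sInf_spectrum_eq_zero_of_isEmpty.symm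
    · exact H.matrixB_isHermitian.sInf_spectrum_le_of_submatrix_le hΓ
        (fun v w h => Subtype.ext (congrArg Subtype.val h))
        H.submatrix_matrixB_le_adjMatrix_induce_slim
end

section
/- Let 𝔥 be a Hoffman graph and let 𝔥¹ and 𝔥² be two nonempty induced Hoffman subgraphs of 𝔥 satisfying: V(𝔥) = V(𝔥¹) ∪ V(𝔥²); {V_s(𝔥¹), V_s(𝔥²)} is a partition of V_s(𝔥); and every fat neighbor of a slim vertex of 𝔥ⁱ lies in 𝔥ⁱ (i = 1, 2). Let ψ be a reduced representation of 𝔥 of norm m. Then 𝔥 = 𝔥¹ ⊎ 𝔥² if and only if (ψ(x), ψ(y)) = 0 for all x ∈ V_s(𝔥¹) and y ∈ V_s(𝔥²). -/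
attribute [local instance] Classical.propDecidable

open scoped RealInnerProductSpace

namespace HoffmanGraph

variable {V : Type*} {H : HoffmanGraph V}

theorem matrixB_eq_zero_iff (x y : H.Slim) :
    H.matrixB x y = 0 ↔
      H.commonFat x.1 y.1 ≤ 1 ∧ (H.commonFat x.1 y.1 = 1 ↔ H.graph.Adj x.1 y.1) := by
  rw [matrixB, sub_eq_zero]
  split_ifs with hadj <;> simp only [hadj, iff_true, iff_false] <;> norm_cast <;> omega

theorem IsReducedRep.inner_eq_matrixB {m : ℝ} {E : Type*} [NormedAddCommGroup E]
    [InnerProductSpace ℝ E] {ψ : V → E} (hψ : H.IsReducedRep m ψ) {x y : V}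
    (hx : H.IsSlim x) (hy : H.IsSlim y) (hxy : x ≠ y) :
    ⟪ψ x, ψ y⟫ = H.matrixB ⟨x, hx⟩ ⟨y, hy⟩ := by
  by_cases hadj : H.graph.Adj x y
  · simp only [matrixB, hadj, if_true, hψ.2.1 x y hx hy hadj]
  · simp only [matrixB, hadj, if_false, zero_sub, hψ.2.2 x y hx hy hxy hadj]

theorem isSum_iff_commonFat {W₁ W₂ : Set V} (h₁ : W₁.Nonempty) (h₂ : W₂.Nonempty)
    (g₁ : H.IsGoodSubset W₁) (g₂ : H.IsGoodSubset W₂) (hunion : W₁ ∪ W₂ = Set.univ)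
    (hpart : ∀ v, H.IsSlim v → (v ∈ W₁ ↔ v ∉ W₂))
    (hfc₁ : ∀ x ∈ W₁, H.IsSlim x → ∀ f, H.IsFat f → H.graph.Adj x f → f ∈ W₁)
    (hfc₂ : ∀ x ∈ W₂, H.IsSlim x → ∀ f, H.IsFat f → H.graph.Adj x f → f ∈ W₂) :
    H.IsSum W₁ W₂ ↔ ∀ x ∈ W₁, ∀ y ∈ W₂, H.IsSlim x → H.IsSlim y →
      H.commonFat x y ≤ 1 ∧ (H.commonFat x y = 1 ↔ H.graph.Adj x y) :=
  ⟨fun hs x hx y hy hxs hys =>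
      ⟨hs.common_le x hx y hy hxs hys, hs.common_iff x hx y hy hxs hys⟩,
    fun h => ⟨h₁, h₂, g₁, g₂, hunion, hpart, hfc₁, hfc₂,
      fun x hx y hy hxs hys => (h x hx y hy hxs hys).1,
      fun x hx y hy hxs hys => (h x hx y hy hxs hys).2⟩⟩

end HoffmanGraph

theorem isSum_iff_reducedRep_orthogonal_general {V : Type} (H : HoffmanGraph V)
    (W₁ W₂ : Set V) (h1 : W₁.Nonempty) (h2 : W₂.Nonempty)
    (g1 : H.IsGoodSubset W₁) (g2 : H.IsGoodSubset W₂)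
    (hunion : W₁ ∪ W₂ = Set.univ)
    (hpart : ∀ v, H.IsSlim v → (v ∈ W₁ ↔ v ∉ W₂))
    (hfc1 : ∀ x ∈ W₁, H.IsSlim x → ∀ f, H.IsFat f → H.graph.Adj x f → f ∈ W₁)
    (hfc2 : ∀ x ∈ W₂, H.IsSlim x → ∀ f, H.IsFat f → H.graph.Adj x f → f ∈ W₂)
    (m : ℝ) {E : Type*} [NormedAddCommGroup E] [InnerProductSpace ℝ E]
    (ψ : V → E) (hψ : H.IsReducedRep m ψ) :
    H.IsSum W₁ W₂ ↔
      ∀ x ∈ W₁, ∀ y ∈ W₂, H.IsSlim x → H.IsSlim y → ⟪ψ x, ψ y⟫ = 0 := by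
  rw [H.isSum_iff_commonFat h1 h2 g1 g2 hunion hpart hfc1 hfc2]
  refine forall₂_congr fun x hx => forall₂_congr fun y hy => forall₂_congr fun hxs hys => ?_
  have hxy : x ≠ y := fun h => (hpart x hxs).mp hx (h ▸ hy)
  rw [hψ.inner_eq_matrixB hxs hys hxy, HoffmanGraph.matrixB_eq_zero_iff]

/-- Lemma 2.11: given subgraphs satisfying (i)–(iii) of the definition of the sum, and a
reduced representation `ψ` of norm `m`, we have `𝔥 = 𝔥¹ ⊎ 𝔥²` iff `(ψ(x), ψ(y)) = 0`
for all slim `x ∈ 𝔥¹` and slim `y ∈ 𝔥²`. -/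
theorem isSum_iff_reducedRep_orthogonal {V : Type} [Fintype V] (H : HoffmanGraph V)
    (W₁ W₂ : Set V) (h1 : W₁.Nonempty) (h2 : W₂.Nonempty)
    (g1 : H.IsGoodSubset W₁) (g2 : H.IsGoodSubset W₂)
    (hunion : W₁ ∪ W₂ = Set.univ)
    (hpart : ∀ v, H.IsSlim v → (v ∈ W₁ ↔ v ∉ W₂))
    (hfc1 : ∀ x ∈ W₁, H.IsSlim x → ∀ f, H.IsFat f → H.graph.Adj x f → f ∈ W₁)
    (hfc2 : ∀ x ∈ W₂, H.IsSlim x → ∀ f, H.IsFat f → H.graph.Adj x f → f ∈ W₂)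
    (m : ℝ) {E : Type*} [NormedAddCommGroup E] [InnerProductSpace ℝ E]
    (ψ : V → E) (hψ : H.IsReducedRep m ψ) :
    H.IsSum W₁ W₂ ↔
      ∀ x ∈ W₁, ∀ y ∈ W₂, H.IsSlim x → H.IsSlim y → ⟪ψ x, ψ y⟫ = 0 :=
  isSum_iff_reducedRep_orthogonal_general H W₁ W₂ h1 h2 g1 g2 hunion hpart hfc1 hfc2 m ψ hψ
end

section
/- If a Hoffman graph 𝔥 is the sum 𝔥 = 𝔥¹ ⊎ 𝔥² of two nonempty induced Hoffman subgraphs 𝔥¹ and 𝔥², then λ_min(𝔥) = min{λ_min(𝔥¹), λ_min(𝔥²)}. -/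
attribute [local instance] Classical.propDecidable

open scoped RealInnerProductSpace

/-! Order the slim vertices of `𝔥` as those of `𝔥¹` followed by those of `𝔥²`. By (iii) the
diagonal blocks of `B(𝔥)` are `B(𝔥¹)` and `B(𝔥²)`, and by (iv) the off-diagonal blocks vanish,
since a slim pair across the summands has a common fat neighbor exactly when it is adjacent.
So `B(𝔥)` is block diagonal up to reindexing, and its spectrum is the union of the two. -/

open Matrix

namespace Matrix

theorem spectrum_reindex {R m n : Type*} [CommRing R] [Fintype m] [Fintype n]
    [DecidableEq m] [DecidableEq n] (e : m ≃ n) (A : Matrix m m R) :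
    spectrum R (reindex e e A) = spectrum R A :=
  AlgEquiv.spectrum_eq (reindexAlgEquiv R R e) A

theorem spectrum_fromBlocks_zero₁₂ {K m n : Type*} [Field K] [Fintype m] [Fintype n]
    [DecidableEq m] [DecidableEq n] (A : Matrix m m K) (C : Matrix n m K) (D : Matrix n n K) :
    spectrum K (fromBlocks A 0 C D) = spectrum K A ∪ spectrum K D := by
  ext μ
  simp only [Set.mem_union, mem_spectrum_iff_isRoot_charpoly, charpoly_fromBlocks_zero₁₂,
    Polynomial.root_mul]

theorem IsHermitian.spectrum_real_nonempty {𝕜 n : Type*} [RCLike 𝕜] [Fintype n] [DecidableEq n]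
    [Nonempty n] {A : Matrix n n 𝕜} (hA : A.IsHermitian) : (spectrum ℝ A).Nonempty :=
  hA.spectrum_real_eq_range_eigenvalues ▸ Set.range_nonempty _

end Matrix

namespace HoffmanGraph

variable {V : Type*}

theorem matrixB_isHermitian_s4 (H : HoffmanGraph V) : H.matrixB.IsHermitian := by
  ext x y
  simp only [conjTranspose_apply, matrixB, star_trivial, H.commonFat_comm y.1 x.1,
    SimpleGraph.adj_comm]

theorem IsGoodSubset.nonempty_slim {H : HoffmanGraph V} {W : Set V} (hW : H.IsGoodSubset W)
    (hne : W.Nonempty) : Nonempty (H.induce W hW).Slim := by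
  obtain ⟨v, hv⟩ := hne
  by_cases hf : H.IsFat v
  · obtain ⟨y, hyW, hy, -⟩ := hW v hv hf
    exact ⟨⟨⟨y, hyW⟩, hy⟩⟩
  · exact ⟨⟨⟨v, hv⟩, hf⟩⟩

def IsFatClosed (H : HoffmanGraph V) (W : Set V) : Prop :=
  ∀ x ∈ W, H.IsSlim x → ∀ f, H.IsFat f → H.graph.Adj x f → f ∈ W

theorem commonFat_induce {H : HoffmanGraph V} {W : Set V} (hW : H.IsGoodSubset W)
    (hcl : H.IsFatClosed W) {x : W} (hx : H.IsSlim x) (y : W) :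
    (H.induce W hW).commonFat x y = H.commonFat x y := by
  have himage : Subtype.val '' {f : W | (H.induce W hW).IsFat f ∧
      (H.induce W hW).graph.Adj x f ∧ (H.induce W hW).graph.Adj y f} =
      {f : V | H.IsFat f ∧ H.graph.Adj x f ∧ H.graph.Adj y f} := by
    ext f
    constructor
    · rintro ⟨f, hf, rfl⟩
      exact hf
    · rintro hf
      exact ⟨⟨f, hcl x x.2 hx f hf.1 hf.2.1⟩, hf, rfl⟩
  rw [commonFat, commonFat, ← himage, Set.ncard_image_of_injective _ Subtype.val_injective]

theorem matrixB_induce {H : HoffmanGraph V} {W : Set V} (hW : H.IsGoodSubset W)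
    (hcl : H.IsFatClosed W) (x y : (H.induce W hW).Slim) :
    (H.induce W hW).matrixB x y = H.matrixB ⟨x.1.1, x.2⟩ ⟨y.1.1, y.2⟩ := by
  simp only [matrixB, commonFat_induce hW hcl x.2]
  rfl

namespace IsSum

variable {H : HoffmanGraph V} {W₁ W₂ : Set V}

theorem matrixB_eq_zero_of_mem₁_of_mem₂ (h : H.IsSum W₁ W₂) {x y : H.Slim} (hx : x.1 ∈ W₁)
    (hy : y.1 ∈ W₂) :
    H.matrixB x y = 0 := by
  have hle := h.common_le x hx y hy x.2 y.2
  have hiff := h.common_iff x hx y hy x.2 y.2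
  by_cases hadj : H.graph.Adj x y
  · simp [matrixB, hadj, hiff.mpr hadj]
  · have hne : H.commonFat x y ≠ 1 := mt hiff.mp hadj
    have hzero : H.commonFat x y = 0 := by omega
    simp [matrixB, hadj, hzero]

theorem matrixB_eq_zero_of_mem₂_of_mem₁ (h : H.IsSum W₁ W₂) {x y : H.Slim} (hx : x.1 ∈ W₂)
    (hy : y.1 ∈ W₁) :
    H.matrixB x y = 0 := by
  rw [← H.matrixB_isHermitian_s4.apply x y, star_trivial,
    h.matrixB_eq_zero_of_mem₁_of_mem₂ hy hx]

theorem mem₂_of_notMem₁ (h : H.IsSum W₁ W₂) {v : V} (hv : v ∉ W₁) : v ∈ W₂ :=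
  (h.union_eq ▸ Set.mem_univ v : v ∈ W₁ ∪ W₂).resolve_left hv

noncomputable def slimEquiv (h : H.IsSum W₁ W₂) :
    (H.induce W₁ h.good₁).Slim ⊕ (H.induce W₂ h.good₂).Slim ≃ H.Slim where
  toFun := Sum.elim (fun x => ⟨x.1.1, x.2⟩) (fun x => ⟨x.1.1, x.2⟩)
  invFun v :=
    if hv : v.1 ∈ W₁ then Sum.inl ⟨⟨v.1, hv⟩, v.2⟩
    else Sum.inr ⟨⟨v.1, h.mem₂_of_notMem₁ hv⟩, v.2⟩
  left_inv := by
    rintro (x | x)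
    · exact dif_pos x.1.2
    · exact dif_neg fun hx => (h.slim_partition x.1 x.2).mp hx x.1.2
  right_inv v := by
    by_cases hv : v.1 ∈ W₁ <;> simp [hv]

theorem reindex_matrixB (h : H.IsSum W₁ W₂) [Fintype V] :
    reindex h.slimEquiv.symm h.slimEquiv.symm H.matrixB =
      fromBlocks (H.induce W₁ h.good₁).matrixB 0 0 (H.induce W₂ h.good₂).matrixB := by
  ext (x | x) (y | y)
  · exact (matrixB_induce h.good₁ h.fat_closed₁ x y).symm
  · exact h.matrixB_eq_zero_of_mem₁_of_mem₂ x.1.2 y.1.2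
  · exact h.matrixB_eq_zero_of_mem₂_of_mem₁ x.1.2 y.1.2
  · exact (matrixB_induce h.good₂ h.fat_closed₂ x y).symm

theorem spectrum_matrixB (h : H.IsSum W₁ W₂) [Fintype V] :
    spectrum ℝ H.matrixB =
      spectrum ℝ (H.induce W₁ h.good₁).matrixB ∪ spectrum ℝ (H.induce W₂ h.good₂).matrixB := by
  rw [← spectrum_fromBlocks_zero₁₂ _ 0, ← h.reindex_matrixB, spectrum_reindex]

end IsSum

end HoffmanGraph

/-- Lemma 2.12: if `𝔥 = 𝔥¹ ⊎ 𝔥²`, then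
`λ_min(𝔥) = min {λ_min(𝔥¹), λ_min(𝔥²)}`. -/
theorem lambdaMin_of_sum {V : Type} [Fintype V] (H : HoffmanGraph V) (W₁ W₂ : Set V)
    (h : H.IsSum W₁ W₂) :
    H.lambdaMin = min (H.induce W₁ h.good₁).lambdaMin (H.induce W₂ h.good₂).lambdaMin := by
  have := h.good₁.nonempty_slim h.nonempty₁
  have := h.good₂.nonempty_slim h.nonempty₂
  rw [HoffmanGraph.lambdaMin, HoffmanGraph.lambdaMin, HoffmanGraph.lambdaMin, h.spectrum_matrixB,
    csInf_union (finite_spectrum _).bddBelow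
      (H.induce W₁ h.good₁).matrixB_isHermitian_s4.spectrum_real_nonempty
      (finite_spectrum _).bddBelow
      (H.induce W₂ h.good₂).matrixB_isHermitian_s4.spectrum_real_nonempty]
  -- the two sides differ only in the `DecidableEq` instances on the slim vertices of the summands
  congr!
end

section
/- Let 𝔥 be a fat indecomposable (−3)-saturated Hoffman graph. Then the reduced representation ψ of norm 3 of 𝔥 is injective on the slim vertices, unless 𝔥 is isomorphic to an induced Hoffman subgraph of the following Hoffman graph 𝔎: the slim vertices of 𝔎 are the elements of ℤ/4ℤ, the fat vertices are f_i for i ∈ ℤ/4ℤ, and the edges are {0, 2}, {1, 3} together with all pairs {i, f_j} with i = j or i = j + 1. -/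
attribute [local instance] Classical.propDecidable

open scoped RealInnerProductSpace

/-!
If `ψ x = ψ y` for slim `x ≠ y`, indecomposability forces `ψ` to vanish nowhere, so slim
vertices have at most two fat neighbours; then `⟪ψ x, ψ y⟫ = ‖ψ y‖²` forces `x ∼ y`, with two
fat neighbours each and none in common, so `u = ψ x` is a unit vector and every `⟪u, ψ z⟫` is
`-1`, `0` or `1`. If `-1` never occurred, removing from `ψ` its component along `u` would be a
reduced representation of norm 3 of `𝔥` with a fat vertex attached to `{z | ⟪u, ψ z⟫ = 1}`,
contradicting saturation. A vertex `z` with `⟪u, ψ z⟫ = -1` has `ψ z = -u` and one fat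
neighbour in common with each of `x` and `y`. Hence `⟪u, ψ z⟫ = 1` only for `z ∈ {x, y}`, at
most two vertices give `-1`, and `0` never occurs since `𝔥` would split along `u^⊥`. The slim
vertices `x, z₁, y, (z₂)` and the four fat neighbours of `x` and `y` then form (part of) `𝔎`.
-/

lemma Set.exists_eq_pair_of_ncard_eq_two {α : Type*} {s : Set α} {a : α} (hs : s.ncard = 2)
    (ha : a ∈ s) : ∃ b, a ≠ b ∧ s = {a, b} := by
  obtain ⟨c, d, hcd, rfl⟩ := Set.ncard_eq_two.mp hs
  rcases ha with rfl | rfl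
  · exact ⟨d, hcd, rfl⟩
  · exact ⟨c, hcd.symm, Set.pair_comm _ _⟩

lemma ZMod.four_cases (i : ZMod 4) : i = 0 ∨ i = 1 ∨ i = 2 ∨ i = 3 := by
  revert i
  decide

namespace HoffmanGraph

variable {V : Type*}

section FatNeighbors

variable (H : HoffmanGraph V)

def fatNeighborSet (x : V) : Set V := {f | H.IsFat f ∧ H.graph.Adj x f}

lemma adj_iff_mem_fatNeighborSet {v f : V} (hf : H.IsFat f) :
    H.graph.Adj v f ↔ f ∈ H.fatNeighborSet v :=
  ⟨fun h => ⟨hf, h⟩, And.right⟩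

lemma fatDeg_eq_ncard (x : V) : H.fatDeg x = (H.fatNeighborSet x).ncard := rfl

lemma commonFat_eq_ncard (x y : V) :
    H.commonFat x y = (H.fatNeighborSet x ∩ H.fatNeighborSet y).ncard := by
  unfold commonFat fatNeighborSet
  congr 1
  ext f
  simp only [Set.mem_ofPred_eq, Set.mem_inter_iff]
  tauto

lemma commonFat_self (x : V) : H.commonFat x x = H.fatDeg x := by
  rw [commonFat_eq_ncard, Set.inter_self, fatDeg_eq_ncard]

lemma commonFat_eq_zero_iff [Finite V] {x y : V} :
    H.commonFat x y = 0 ↔ Disjoint (H.fatNeighborSet x) (H.fatNeighborSet y) := by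
  rw [commonFat_eq_ncard, Set.ncard_eq_zero, Set.disjoint_iff_inter_eq_empty]

lemma commonFat_add_commonFat_le_fatDeg [Finite V] {x y : V} (hxy : H.commonFat x y = 0)
    (z : V) : H.commonFat x z + H.commonFat y z ≤ H.fatDeg z := by
  have hdisj := H.commonFat_eq_zero_iff.mp hxy
  rw [commonFat_eq_ncard, commonFat_eq_ncard, fatDeg_eq_ncard,
    ← Set.ncard_union_eq (hdisj.mono Set.inter_subset_left Set.inter_subset_left)]
  exact Set.ncard_le_ncard (Set.union_subset Set.inter_subset_right Set.inter_subset_right)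

lemma mem_closureSet_iff_of_isSlim {S : Set V} {v : V} (hv : H.IsSlim v) :
    v ∈ H.closureSet S ↔ v ∈ S :=
  ⟨fun h => h.resolve_right fun hf => hv hf.1, Or.inl⟩

lemma isGoodSubset_closureSet {S : Set V} (hS : ∀ v ∈ S, H.IsSlim v) :
    H.IsGoodSubset (H.closureSet S) := by
  rintro x (hx | ⟨-, z, hz, hzx⟩) hf
  · exact absurd hf (hS x hx)
  · exact ⟨z, Or.inl hz, hS z hz, hzx.symm⟩

lemma mem_closureSet_of_adj {S : Set V} {x f : V} (hx : x ∈ H.closureSet S)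
    (hxs : H.IsSlim x) (hf : H.IsFat f) (hxf : H.graph.Adj x f) : f ∈ H.closureSet S :=
  Or.inr ⟨hf, x, (H.mem_closureSet_iff_of_isSlim hxs).mp hx, hxf⟩

lemma decomposable_of_partition (P : V → Prop) (h₁ : ∃ v, H.IsSlim v ∧ P v)
    (h₂ : ∃ v, H.IsSlim v ∧ ¬ P v)
    (hcross : ∀ a b, H.IsSlim a → H.IsSlim b → P a → ¬ P b →
      H.commonFat a b = if H.graph.Adj a b then 1 else 0) :
    H.Decomposable := by
  set W₁ := H.closureSet {v | H.IsSlim v ∧ P v}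
  set W₂ := H.closureSet {v | H.IsSlim v ∧ ¬ P v}
  have hmem : ∀ Q : V → Prop, ∀ v, H.IsSlim v →
      (v ∈ H.closureSet {v | H.IsSlim v ∧ Q v} ↔ Q v) := fun Q v hv =>
    (H.mem_closureSet_iff_of_isSlim hv).trans (and_iff_right hv)
  have hcross' : ∀ a ∈ W₁, ∀ b ∈ W₂, H.IsSlim a → H.IsSlim b →
      H.commonFat a b = if H.graph.Adj a b then 1 else 0 := fun a ha b hb hsa hsb =>
    hcross a b hsa hsb ((hmem P a hsa).mp ha) ((hmem (¬ P ·) b hsb).mp hb)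
  refine ⟨W₁, W₂, ⟨?_, ?_, H.isGoodSubset_closureSet fun v hv => hv.1,
    H.isGoodSubset_closureSet fun v hv => hv.1, ?_, ?_,
    fun x hx hxs f hf => H.mem_closureSet_of_adj hx hxs hf,
    fun x hx hxs f hf => H.mem_closureSet_of_adj hx hxs hf, ?_, ?_⟩⟩
  · obtain ⟨v, hv⟩ := h₁
    exact ⟨v, Or.inl hv⟩
  · obtain ⟨v, hv⟩ := h₂
    exact ⟨v, Or.inl hv⟩
  · refine Set.eq_univ_of_forall fun v => ?_
    by_cases hv : H.IsFat v
    · obtain ⟨z, hz, hvz⟩ := H.fat_slim_nbr hv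
      by_cases hP : P z
      · exact Or.inl (Or.inr ⟨hv, z, ⟨hz, hP⟩, hvz.symm⟩)
      · exact Or.inr (Or.inr ⟨hv, z, ⟨hz, hP⟩, hvz.symm⟩)
    · by_cases hP : P v
      · exact Or.inl (Or.inl ⟨hv, hP⟩)
      · exact Or.inr (Or.inl ⟨hv, hP⟩)
  · intro v hv
    rw [hmem P v hv, hmem _ v hv, not_not]
  · intro a ha b hb hsa hsb
    rw [hcross' a ha b hb hsa hsb]
    split_ifs <;> omega
  · intro a ha b hb hsa hsb
    rw [hcross' a ha b hb hsa hsb]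
    split_ifs <;> simp_all

end FatNeighbors

variable {H : HoffmanGraph V} {E : Type*} [NormedAddCommGroup E] [InnerProductSpace ℝ E]
  {m : ℝ} {ψ : V → E}

lemma IsReducedRep.inner_eq_of_ne (hψ : H.IsReducedRep m ψ) {a b : V} (ha : H.IsSlim a)
    (hb : H.IsSlim b) (hab : a ≠ b) :
    ⟪ψ a, ψ b⟫ = (if H.graph.Adj a b then 1 else 0) - H.commonFat a b := by
  split_ifs with hadj
  · exact hψ.2.1 a b ha hb hadj
  · rw [hψ.2.2 a b ha hb hab hadj, zero_sub]

lemma IsReducedRep.inner_eq_matrixB_s15 (hψ : H.IsReducedRep m ψ) (a b : H.Slim) :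
    ⟪ψ a, ψ b⟫ = H.matrixB a b + if a = b then m else 0 := by
  by_cases hab : a = b
  · subst hab
    rw [hψ.1 a a.2, if_pos rfl]
    simp [matrixB, commonFat_self, sub_eq_neg_add]
  · rw [hψ.inner_eq_of_ne a.2 b.2 (Subtype.coe_ne_coe.mpr hab), if_neg hab, add_zero]
    rfl

lemma IsReducedRep.fatDeg_lt (hψ : H.IsReducedRep m ψ) {z : V} (hz : H.IsSlim z)
    (hz0 : ψ z ≠ 0) : (H.fatDeg z : ℝ) < m := by
  have := hψ.1 z hz ▸ real_inner_self_pos.mpr hz0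
  linarith

lemma IsReducedRep.norm_eq_one (hψ : H.IsReducedRep 3 ψ) {z : V} (hz : H.IsSlim z)
    (hdz : H.fatDeg z = 2) : ‖ψ z‖ = 1 := by
  have h := hψ.1 z hz
  rw [hdz, real_inner_self_eq_norm_sq] at h
  exact (pow_eq_one_iff_of_nonneg (norm_nonneg _) two_ne_zero).mp (by norm_num [h])

lemma IsReducedRep.adj_and_commonFat_eq_zero (hψ : H.IsReducedRep m ψ) {a b : V}
    (ha : H.IsSlim a) (hb : H.IsSlim b) (hab : a ≠ b) (h : ⟪ψ a, ψ b⟫ = 1) :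
    H.graph.Adj a b ∧ H.commonFat a b = 0 := by
  rw [hψ.inner_eq_of_ne ha hb hab] at h
  split_ifs at h with hadj
  · exact ⟨hadj, by exact_mod_cast (by linarith : (H.commonFat a b : ℝ) = 0)⟩
  · linarith [(H.commonFat a b).cast_nonneg (α := ℝ)]

lemma IsReducedRep.commonFat_eq_of_inner_eq_neg_one (hψ : H.IsReducedRep m ψ) {a b : V}
    (ha : H.IsSlim a) (hb : H.IsSlim b) (hab : a ≠ b) (h : ⟪ψ a, ψ b⟫ = -1) :
    H.commonFat a b = if H.graph.Adj a b then 2 else 1 := by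
  rw [hψ.inner_eq_of_ne ha hb hab] at h
  split_ifs at h ⊢
  · exact_mod_cast (by linarith : (H.commonFat a b : ℝ) = 2)
  · exact_mod_cast (by linarith : (H.commonFat a b : ℝ) = 1)

lemma IsReducedRep.inner_eq_neg_one_or_zero_or_one (hψ : H.IsReducedRep 3 ψ) {x z : V}
    (hx : H.IsSlim x) (hz : H.IsSlim z) (hxx : ⟪ψ x, ψ x⟫ = 1) (hdz : 1 ≤ H.fatDeg z) :
    ⟪ψ x, ψ z⟫ = -1 ∨ ⟪ψ x, ψ z⟫ = 0 ∨ ⟪ψ x, ψ z⟫ = 1 := by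
  by_cases hxz : x = z
  · exact Or.inr (Or.inr (hxz ▸ hxx))
  obtain ⟨k, hk⟩ : ∃ k : ℤ, ⟪ψ x, ψ z⟫ = k :=
    ⟨(if H.graph.Adj x z then 1 else 0) - H.commonFat x z, by
      rw [hψ.inner_eq_of_ne hx hz hxz]; push_cast; rfl⟩
  -- Cauchy–Schwarz: `k ^ 2 ≤ ‖ψ x‖² ‖ψ z‖² = 3 - fatDeg z ≤ 2`.
  have hcs := real_inner_mul_inner_self_le (ψ x) (ψ z)
  rw [hxx, hψ.1 z hz, hk] at hcs
  have hk2 : k * k ≤ 2 := by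
    have : (1 : ℝ) ≤ H.fatDeg z := by exact_mod_cast hdz
    exact_mod_cast (by linarith : (k * k : ℝ) ≤ 2)
  have : k = -1 ∨ k = 0 ∨ k = 1 := by
    have : -1 ≤ k := by nlinarith
    have : k ≤ 1 := by nlinarith
    omega
  rcases this with rfl | rfl | rfl <;> simp [hk]

lemma IsReducedRep.decomposable_of_orthogonal (hψ : H.IsReducedRep m ψ) (P : V → Prop)
    (h₁ : ∃ v, H.IsSlim v ∧ P v) (h₂ : ∃ v, H.IsSlim v ∧ ¬ P v)
    (horth : ∀ a b, H.IsSlim a → H.IsSlim b → P a → ¬ P b → ⟪ψ a, ψ b⟫ = 0) :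
    H.Decomposable := by
  refine H.decomposable_of_partition P h₁ h₂ fun a b ha hb hPa hPb => ?_
  have h := horth a b ha hb hPa hPb
  rw [hψ.inner_eq_of_ne ha hb (by rintro rfl; exact hPb hPa)] at h
  split_ifs at h ⊢
  · exact_mod_cast (by linarith : (H.commonFat a b : ℝ) = 1)
  · exact_mod_cast (by linarith : (H.commonFat a b : ℝ) = 0)

lemma IsReducedRep.ne_zero_of_indecomposable (hψ : H.IsReducedRep m ψ)
    (hind : H.Indecomposable) {z w : V} (hz : H.IsSlim z) (hw : H.IsSlim w) (hwz : w ≠ z) :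
    ψ z ≠ 0 := by
  intro hz0
  refine hind (hψ.decomposable_of_orthogonal (· = z) ⟨z, hz, rfl⟩ ⟨w, hw, hwz⟩ ?_)
  rintro a b - - rfl -
  rw [hz0, inner_zero_left]

open Matrix in
/-- The Gram matrix of `ψ` on the slim vertices is `B(𝔥) + m I`, which is positive
semidefinite; so every real eigenvalue of `B(𝔥)` is at least `-m`. (`0 ≤ m` covers the empty
spectrum, whose `sInf` is `0`.) -/
lemma neg_le_lambdaMin_of_isReducedRep [Fintype V] (hm : 0 ≤ m)
    (hψ : H.IsReducedRep m ψ) : -m ≤ H.lambdaMin := by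
  rcases (spectrum ℝ H.matrixB).eq_empty_or_nonempty with hemp | hne
  · rw [lambdaMin, hemp, Real.sInf_empty]
    linarith
  refine le_csInf hne fun μ hμ => ?_
  rw [spectrum.mem_iff, Matrix.isUnit_iff_isUnit_det, isUnit_iff_ne_zero, not_not] at hμ
  obtain ⟨v, hv0, hv⟩ := Matrix.exists_mulVec_eq_zero_iff.mpr hμ
  have heig : H.matrixB *ᵥ v = μ • v := by
    rw [Matrix.sub_mulVec, Algebra.algebraMap_eq_smul_one, Matrix.smul_mulVec,
      Matrix.one_mulVec, sub_eq_zero] at hv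
    exact hv.symm
  have hgram : ⟪∑ a, v a • ψ a, ∑ b, v b • ψ b⟫ = (μ + m) * (v ⬝ᵥ v) :=
    calc ⟪∑ a, v a • ψ a, ∑ b, v b • ψ b⟫
        = ∑ a, ∑ b, v a * (H.matrixB a b * v b + if a = b then m * v b else 0) := by
          rw [sum_inner]
          refine Finset.sum_congr rfl fun a _ => ?_
          rw [inner_sum]
          refine Finset.sum_congr rfl fun b _ => ?_
          rw [real_inner_smul_left, real_inner_smul_right, hψ.inner_eq_matrixB_s15]
          split_ifs <;> ring
      _ = v ⬝ᵥ (H.matrixB *ᵥ v) + m * (v ⬝ᵥ v) := by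
          simp only [mul_add, Finset.sum_add_distrib, mul_ite, mul_zero, Finset.sum_ite_eq,
            Finset.mem_univ, if_true, dotProduct, mulVec, Finset.mul_sum]
          congr 1
          exact Finset.sum_congr rfl fun a _ => by ring
      _ = (μ + m) * (v ⬝ᵥ v) := by
          rw [heig, dotProduct_smul, smul_eq_mul]
          ring
  have hpos : 0 < v ⬝ᵥ v := by
    obtain ⟨a, ha⟩ := Function.ne_iff.mp hv0
    exact Finset.sum_pos' (fun b _ => mul_self_nonneg _)
      ⟨a, Finset.mem_univ a, mul_self_pos.mpr ha⟩
  have := hgram ▸ real_inner_self_nonneg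
  nlinarith

section AttachFat

variable {S : Set V} (hne : S.Nonempty) (hslim : ∀ v ∈ S, H.IsSlim v)

lemma commonFat_attachFat [Finite V] (z w : V) :
    (H.attachFat S hne hslim).commonFat (some z) (some w) =
      H.commonFat z w + if z ∈ S ∧ w ∈ S then 1 else 0 := by
  have hsome : some '' {f | H.IsFat f ∧ H.graph.Adj z f ∧ H.graph.Adj w f} =
      {f | (H.attachFat S hne hslim).IsFat f ∧ (H.attachFat S hne hslim).graph.Adj (some z) f ∧
        (H.attachFat S hne hslim).graph.Adj (some w) f} \ {none} := by
    ext (_ | f) <;> simp [attachFat]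
  unfold commonFat
  rw [← Set.ncard_image_of_injective _ (Option.some_injective V), hsome]
  split_ifs with h
  · rw [Set.ncard_sdiff_singleton_add_one (by exact ⟨trivial, h⟩)]
  · rw [Set.sdiff_singleton_eq_self (by exact fun hn => h ⟨hn.2.1, hn.2.2⟩), add_zero]

/-- Removing from `ψ z` and `ψ w` their components along `u` lowers their inner product by
`[z ∈ S][w ∈ S]`, which is exactly what the new fat vertex adds to their common fat degree. -/
lemma IsReducedRep.attachFat [Finite V] (hψ : H.IsReducedRep m ψ) {u : E} (hu : ⟪u, u⟫ = 1)
    (hS : ∀ z, H.IsSlim z → ⟪u, ψ z⟫ = if z ∈ S then 1 else 0) :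
    (H.attachFat S hne hslim).IsReducedRep m
      (fun o => o.elim 0 fun z => ψ z - ⟪u, ψ z⟫ • u) := by
  have hinner : ∀ z w, H.IsSlim z → H.IsSlim w →
      ⟪ψ z - ⟪u, ψ z⟫ • u, ψ w - ⟪u, ψ w⟫ • u⟫ =
        ⟪ψ z, ψ w⟫ - if z ∈ S ∧ w ∈ S then 1 else 0 := by
    intro z w hz hw
    simp only [inner_sub_left, inner_sub_right, real_inner_smul_left, real_inner_smul_right,
      real_inner_comm u (ψ z), hu, hS z hz, hS w hw]
    by_cases hzS : z ∈ S <;> by_cases hwS : w ∈ S <;> simp [hzS, hwS]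
  have hfatDeg : ∀ z, (H.attachFat S hne hslim).fatDeg (some z) =
      H.fatDeg z + if z ∈ S then 1 else 0 := fun z => by
    rw [← commonFat_self, commonFat_attachFat, commonFat_self]
    simp only [and_self]
  refine ⟨?_, ?_, ?_⟩
  · rintro (_ | z) hz
    · exact (hz trivial).elim
    simp only [Option.elim_some, hinner z z hz hz, hψ.1 z hz, hfatDeg, and_self]
    push_cast
    ring
  · rintro (_ | z) (_ | w) hz hw hzw
    · exact (hz trivial).elim
    · exact (hz trivial).elim
    · exact (hw trivial).elim
    simp only [Option.elim_some, hinner z w hz hw, hψ.2.1 z w hz hw hzw, commonFat_attachFat]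
    push_cast
    ring
  · rintro (_ | z) (_ | w) hz hw hzw hnadj
    · exact (hz trivial).elim
    · exact (hz trivial).elim
    · exact (hw trivial).elim
    simp only [Option.elim_some, hinner z w hz hw, commonFat_attachFat,
      hψ.2.2 z w hz hw (fun h => hzw (congrArg some h)) hnadj]
    push_cast
    ring

end AttachFat

lemma IsSaturated.exists_inner_ne_zero_ne_one [Fintype V] (hsat : H.IsSaturated (-m))
    (hm : 0 ≤ m) (hψ : H.IsReducedRep m ψ) {u : E} (hu : ⟪u, u⟫ = 1) {x : V}
    (hx : H.IsSlim x) (hux : ⟪u, ψ x⟫ = 1) :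
    ∃ z, H.IsSlim z ∧ ⟪u, ψ z⟫ ≠ 0 ∧ ⟪u, ψ z⟫ ≠ 1 := by
  by_contra! h01
  set S := {z | H.IsSlim z ∧ ⟪u, ψ z⟫ = 1}
  have hS : ∀ z, H.IsSlim z → ⟪u, ψ z⟫ = if z ∈ S then 1 else 0 := by
    intro z hz
    by_cases h1 : ⟪u, ψ z⟫ = 1
    · rw [if_pos ⟨hz, h1⟩, h1]
    · rw [if_neg fun h => h1 h.2]
      by_contra h0
      exact h1 (h01 z hz h0)
  exact hsat.2 S ⟨x, hx, hux⟩ (fun v hv => hv.1) <|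
    neg_le_lambdaMin_of_isReducedRep hm (hψ.attachFat _ _ hu fun z hz => by convert hS z hz)

lemma adj_iff_of_fatNeighborSet_eq {f : ZMod 4 → V} (hf : ∀ j, H.IsFat (f j))
    (hf_inj : Function.Injective f) {v : V} {i : ZMod 4}
    (hv : H.fatNeighborSet v = {f i, f (i - 1)}) (j : ZMod 4) :
    H.graph.Adj v (f j) ↔ i = j ∨ i = j + 1 := by
  rw [H.adj_iff_mem_fatNeighborSet (hf j), hv, Set.mem_insert_iff, Set.mem_singleton_iff,
    hf_inj.eq_iff, hf_inj.eq_iff, eq_sub_iff_add_eq, eq_comm, @eq_comm _ (j + 1)]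

lemma isInducedSubgraphOf_exampleA3tilde_of_labelling (T : Set (ZMod 4)) (s f : ZMod 4 → V)
    (hs : ∀ i ∈ T, H.IsSlim (s i)) (hf : ∀ j, H.IsFat (f j)) (hf_inj : Function.Injective f)
    (hcover : ∀ v, H.IsSlim v → ∃ i ∈ T, s i = v)
    (hss : ∀ i ∈ T, ∀ j ∈ T, H.graph.Adj (s i) (s j) ↔ j = i + 2)
    (hsf : ∀ i ∈ T, H.fatNeighborSet (s i) = {f i, f (i - 1)}) :
    H.IsInducedSubgraphOf exampleA3tilde := by
  have hadj : ∀ i ∈ T, ∀ j, H.graph.Adj (s i) (f j) ↔ i = j ∨ i = j + 1 := fun i hi =>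
    adj_iff_of_fatNeighborSet_eq hf hf_inj (hsf i hi)
  set g : T ⊕ ZMod 4 → V := Sum.elim (fun i => s i) f
  have hg : Function.Bijective g := by
    refine ⟨?_, fun v => ?_⟩
    · have hlabel : ∀ a b : ZMod 4,
          (∀ k, (a = k ∨ a = k + 1) ↔ (b = k ∨ b = k + 1)) → a = b := by decide
      rintro (⟨i, hi⟩ | j) (⟨i', hi'⟩ | j') h
      · refine congrArg Sum.inl (Subtype.ext (hlabel i i' fun k => ?_))
        rw [← hadj i hi, ← hadj i' hi']
        exact iff_of_eq (congrArg (H.graph.Adj · (f k)) h)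
      · exact absurd ((show s i = f j' from h) ▸ hf j') (hs i hi)
      · exact absurd ((show f j = s i' from h) ▸ hf j) (hs i' hi')
      · exact congrArg Sum.inr (hf_inj h)
    · by_cases hv : H.IsFat v
      · obtain ⟨w, hw, hwv⟩ := H.fat_slim_nbr hv
        obtain ⟨i, hi, rfl⟩ := hcover w hw
        have hvi : v ∈ H.fatNeighborSet (s i) := ⟨hv, hwv.symm⟩
        rw [hsf i hi] at hvi
        rcases hvi with rfl | rfl
        exacts [⟨.inr i, rfl⟩, ⟨.inr (i - 1), rfl⟩]
      · obtain ⟨i, hi, rfl⟩ := hcover v hv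
        exact ⟨.inl ⟨i, hi⟩, rfl⟩
  set e := Equiv.ofBijective g hg
  refine ⟨⟨Sum.map Subtype.val id ∘ e.symm,
    (Sum.map_injective.mpr ⟨Subtype.val_injective, Function.injective_id⟩).comp
      e.symm.injective⟩, fun u v => ?_, fun v => ?_⟩
  · obtain ⟨p, rfl⟩ := e.surjective u
    obtain ⟨q, rfl⟩ := e.surjective v
    simp only [Function.Embedding.coeFn_mk, Function.comp_apply, Equiv.symm_apply_apply]
    rcases p with ⟨i, hi⟩ | j <;> rcases q with ⟨i', hi'⟩ | j'
    · exact (hss i hi i' hi').symm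
    · exact (hadj i hi j').symm
    · exact ((H.graph.adj_comm _ _).trans (hadj i' hi' j)).symm
    · exact iff_of_false id (H.fat_not_adj (hf j) (hf j'))
  · obtain ⟨p, rfl⟩ := e.surjective v
    simp only [Function.Embedding.coeFn_mk, Function.comp_apply, Equiv.symm_apply_apply]
    rcases p with ⟨i, hi⟩ | j
    · exact iff_of_false id (hs i hi)
    · exact iff_of_true trivial (hf j)

structure TwinPair (H : HoffmanGraph V) (ψ : V → E) (x y : V) : Prop where
  rep : H.IsReducedRep 3 ψ
  fat : H.IsFatGraph
  slim_left : H.IsSlim x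
  slim_right : H.IsSlim y
  ne : x ≠ y
  eq : ψ x = ψ y
  ne_zero : ∀ z, H.IsSlim z → ψ z ≠ 0

namespace TwinPair

variable {x y z : V}

lemma symm (ht : TwinPair H ψ x y) : TwinPair H ψ y x :=
  ⟨ht.rep, ht.fat, ht.slim_right, ht.slim_left, ht.ne.symm, ht.eq.symm, ht.ne_zero⟩

lemma one_le_fatDeg [Finite V] (ht : TwinPair H ψ x y) (hz : H.IsSlim z) :
    1 ≤ H.fatDeg z :=
  (Set.ncard_pos).mpr (ht.fat z hz)

lemma fatDeg_le_two (ht : TwinPair H ψ x y) (hz : H.IsSlim z) : H.fatDeg z ≤ 2 := by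
  have := ht.rep.fatDeg_lt hz (ht.ne_zero z hz)
  have : H.fatDeg z < 3 := by exact_mod_cast this
  omega

lemma adj_and_commonFat_eq_zero_and_fatDeg_eq_two (ht : TwinPair H ψ x y) :
    H.graph.Adj x y ∧ H.commonFat x y = 0 ∧ H.fatDeg x = 2 := by
  have hxy := ht.rep.inner_eq_of_ne ht.slim_left ht.slim_right ht.ne
  rw [← ht.eq, ht.rep.1 x ht.slim_left] at hxy
  have hdeg := ht.fatDeg_le_two ht.slim_left
  split_ifs at hxy with hadj
  · have : H.fatDeg x = 2 + H.commonFat x y := by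
      exact_mod_cast (by linarith : (H.fatDeg x : ℝ) = 2 + H.commonFat x y)
    exact ⟨hadj, by omega, by omega⟩
  · have : (H.fatDeg x : ℝ) ≤ 2 := by exact_mod_cast hdeg
    linarith [(H.commonFat x y).cast_nonneg (α := ℝ)]

lemma inner_self_left (ht : TwinPair H ψ x y) : ⟪ψ x, ψ x⟫ = 1 := by
  rw [ht.rep.1 x ht.slim_left, ht.adj_and_commonFat_eq_zero_and_fatDeg_eq_two.2.2]
  norm_num

lemma inner_eq_neg_one_or_zero_or_one [Finite V] (ht : TwinPair H ψ x y) (hz : H.IsSlim z) :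
    ⟪ψ x, ψ z⟫ = -1 ∨ ⟪ψ x, ψ z⟫ = 0 ∨ ⟪ψ x, ψ z⟫ = 1 :=
  ht.rep.inner_eq_neg_one_or_zero_or_one ht.slim_left hz ht.inner_self_left (ht.one_le_fatDeg hz)

lemma ne_left_of_inner_eq_neg_one (ht : TwinPair H ψ x y) (h : ⟪ψ x, ψ z⟫ = -1) : z ≠ x := by
  rintro rfl
  linarith [ht.inner_self_left]

/-- The common fat neighbours of `z` with `x` and with `y` are disjoint, so they are
at most `fatDeg z ≤ 2` in number, while each side contributes at least one. -/
lemma not_adj_and_commonFat_eq_one_of_inner_eq_neg_one [Finite V] (ht : TwinPair H ψ x y)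
    (hz : H.IsSlim z) (h : ⟪ψ x, ψ z⟫ = -1) :
    ¬ H.graph.Adj x z ∧ H.commonFat x z = 1 ∧ H.fatDeg z = 2 := by
  have hx := ht.rep.commonFat_eq_of_inner_eq_neg_one ht.slim_left hz
    (ht.ne_left_of_inner_eq_neg_one h).symm h
  have hy := ht.rep.commonFat_eq_of_inner_eq_neg_one ht.slim_right hz
    (ht.symm.ne_left_of_inner_eq_neg_one (ht.eq ▸ h)).symm (ht.eq ▸ h)
  have hsum := H.commonFat_add_commonFat_le_fatDeg
    ht.adj_and_commonFat_eq_zero_and_fatDeg_eq_two.2.1 z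
  have hdz := ht.fatDeg_le_two hz
  split_ifs at hx hy with hadjx hadjy
  · omega
  · omega
  · omega
  · exact ⟨hadjx, hx, by omega⟩

lemma not_adj_of_inner_eq_neg_one [Finite V] (ht : TwinPair H ψ x y) (hz : H.IsSlim z)
    (h : ⟪ψ x, ψ z⟫ = -1) : ¬ H.graph.Adj x z ∧ ¬ H.graph.Adj y z :=
  ⟨(ht.not_adj_and_commonFat_eq_one_of_inner_eq_neg_one hz h).1,
    (ht.symm.not_adj_and_commonFat_eq_one_of_inner_eq_neg_one hz (ht.eq ▸ h)).1⟩

lemma eq_neg_of_inner_eq_neg_one [Finite V] (ht : TwinPair H ψ x y) (hz : H.IsSlim z)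
    (h : ⟪ψ x, ψ z⟫ = -1) : ψ z = -ψ x := by
  have hx := ht.rep.norm_eq_one ht.slim_left ht.adj_and_commonFat_eq_zero_and_fatDeg_eq_two.2.2
  have hz' := ht.rep.norm_eq_one hz (ht.not_adj_and_commonFat_eq_one_of_inner_eq_neg_one hz h).2.2
  exact neg_eq_iff_eq_neg.mp ((inner_eq_neg_one_iff_of_norm_eq_one hx hz').mp h).symm

lemma exists_fatNeighborSet_eq_pair [Finite V] (ht : TwinPair H ψ x y) (hz : H.IsSlim z)
    (h : ⟪ψ x, ψ z⟫ = -1) : ∃ a b, a ∈ H.fatNeighborSet x ∧ b ∈ H.fatNeighborSet y ∧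
      H.fatNeighborSet z = {a, b} := by
  obtain ⟨-, hx, hdz⟩ := ht.not_adj_and_commonFat_eq_one_of_inner_eq_neg_one hz h
  obtain ⟨-, hy, -⟩ := ht.symm.not_adj_and_commonFat_eq_one_of_inner_eq_neg_one hz (ht.eq ▸ h)
  rw [commonFat_eq_ncard, Set.ncard_eq_one] at hx hy
  obtain ⟨a, ha⟩ := hx
  obtain ⟨b, hb⟩ := hy
  have ha' : a ∈ H.fatNeighborSet x ∩ H.fatNeighborSet z := ha ▸ Set.mem_singleton a
  have hb' : b ∈ H.fatNeighborSet y ∩ H.fatNeighborSet z := hb ▸ Set.mem_singleton b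
  have hab : a ≠ b := fun hab => (H.commonFat_eq_zero_iff.mp
    ht.adj_and_commonFat_eq_zero_and_fatDeg_eq_two.2.1).ne_of_mem ha'.1 hb'.1 hab
  refine ⟨a, b, ha'.1, hb'.1, (Set.eq_of_subset_of_ncard_le ?_ ?_).symm⟩
  · exact Set.insert_subset ha'.2 (Set.singleton_subset_iff.mpr hb'.2)
  · rw [← fatDeg_eq_ncard, hdz, Set.ncard_pair hab]

/-- A vertex `z ∉ {x, y}` with `⟪ψ x, ψ z⟫ = 1` would be adjacent to `x` and `y` without common
fat neighbours, yet share a fat neighbour with any `z₁` with `ψ z₁ = -ψ x`; but every fat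
neighbour of `z₁` is one of `x` or of `y`. -/
lemma eq_or_eq_of_inner_eq_one [Finite V] (ht : TwinPair H ψ x y) {z₁ : V} (hz₁ : H.IsSlim z₁)
    (h₁ : ⟪ψ x, ψ z₁⟫ = -1) (hz : H.IsSlim z) (h : ⟪ψ x, ψ z⟫ = 1) : z = x ∨ z = y := by
  by_contra! hzxy
  have hx := (ht.rep.adj_and_commonFat_eq_zero ht.slim_left hz hzxy.1.symm h).2
  have hy := (ht.rep.adj_and_commonFat_eq_zero ht.slim_right hz hzxy.2.symm (ht.eq ▸ h)).2
  have hz₁z : ⟪ψ z₁, ψ z⟫ = -1 := by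
    rw [ht.eq_neg_of_inner_eq_neg_one hz₁ h₁, inner_neg_left, h]
  have hc := ht.rep.commonFat_eq_of_inner_eq_neg_one hz₁ hz
    (by rintro rfl; linarith) hz₁z
  obtain ⟨g, hg₁, hg⟩ : (H.fatNeighborSet z₁ ∩ H.fatNeighborSet z).Nonempty := by
    rw [← Set.ncard_pos, ← commonFat_eq_ncard, hc]
    split_ifs <;> norm_num
  obtain ⟨a, b, ha, hb, hN⟩ := ht.exists_fatNeighborSet_eq_pair hz₁ h₁
  rw [hN] at hg₁
  rcases hg₁ with rfl | rfl
  · exact (H.commonFat_eq_zero_iff.mp hx).ne_of_mem ha hg rfl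
  · exact (H.commonFat_eq_zero_iff.mp hy).ne_of_mem hb hg rfl

lemma adj_and_commonFat_eq_zero_of_inner_eq_neg_one [Finite V] (ht : TwinPair H ψ x y)
    {w : V} (hz : H.IsSlim z) (hw : H.IsSlim w) (hzw : z ≠ w) (hz' : ⟪ψ x, ψ z⟫ = -1)
    (hw' : ⟪ψ x, ψ w⟫ = -1) : H.graph.Adj z w ∧ H.commonFat z w = 0 :=
  ht.rep.adj_and_commonFat_eq_zero hz hw hzw <| by
    rw [ht.eq_neg_of_inner_eq_neg_one hz hz', ht.eq_neg_of_inner_eq_neg_one hw hw',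
      inner_neg_neg, ht.inner_self_left]

lemma eq_or_eq_neg [Finite V] (ht : TwinPair H ψ x y) {z₁ : V} (hz₁ : H.IsSlim z₁)
    (h₁ : ⟪ψ x, ψ z₁⟫ = -1) (hz : H.IsSlim z) (h : ⟪ψ x, ψ z⟫ ≠ 0) :
    ψ z = ψ x ∨ ψ z = -ψ x := by
  rcases ht.inner_eq_neg_one_or_zero_or_one hz with h' | h' | h'
  · exact Or.inr (ht.eq_neg_of_inner_eq_neg_one hz h')
  · exact absurd h' h
  · rcases ht.eq_or_eq_of_inner_eq_one hz₁ h₁ hz h' with rfl | rfl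
    · exact Or.inl rfl
    · exact Or.inl ht.eq.symm

lemma inner_ne_zero [Finite V] (ht : TwinPair H ψ x y) (hind : H.Indecomposable) {z₁ : V}
    (hz₁ : H.IsSlim z₁) (h₁ : ⟪ψ x, ψ z₁⟫ = -1) (hz : H.IsSlim z) : ⟪ψ x, ψ z⟫ ≠ 0 := by
  intro h
  refine hind (ht.rep.decomposable_of_orthogonal (fun v => ⟪ψ x, ψ v⟫ ≠ 0)
    ⟨x, ht.slim_left, by rw [ht.inner_self_left]; exact one_ne_zero⟩ ⟨z, hz, not_not.mpr h⟩ ?_)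
  intro a b ha hb hPa hPb
  rw [not_not] at hPb
  rcases ht.eq_or_eq_neg hz₁ h₁ ha hPa with h' | h' <;> simp [h', hPb]

lemma eq_or_eq_or_eq_of_inner_eq_neg_one [Finite V] (ht : TwinPair H ψ x y) {u v w : V}
    (hu : H.IsSlim u) (hv : H.IsSlim v) (hw : H.IsSlim w) (hu' : ⟪ψ x, ψ u⟫ = -1)
    (hv' : ⟪ψ x, ψ v⟫ = -1) (hw' : ⟪ψ x, ψ w⟫ = -1) : u = v ∨ u = w ∨ v = w := by
  by_contra! hne
  have hfat : ∀ {z}, H.IsSlim z → ⟪ψ x, ψ z⟫ = -1 →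
      ∃ a ∈ H.fatNeighborSet x, a ∈ H.fatNeighborSet z := fun hz hz' => by
    obtain ⟨a, b, ha, -, hN⟩ := ht.exists_fatNeighborSet_eq_pair hz hz'
    exact ⟨a, ha, hN ▸ Set.mem_insert a _⟩
  have hdisj : ∀ {z z'}, H.IsSlim z → H.IsSlim z' → ⟪ψ x, ψ z⟫ = -1 → ⟪ψ x, ψ z'⟫ = -1 →
      z ≠ z' → Disjoint (H.fatNeighborSet z) (H.fatNeighborSet z') := fun hz hz' h h' hzz' =>
    H.commonFat_eq_zero_iff.mp
      (ht.adj_and_commonFat_eq_zero_of_inner_eq_neg_one hz hz' hzz' h h').2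
  obtain ⟨a, ha, hau⟩ := hfat hu hu'
  obtain ⟨b, hb, hbv⟩ := hfat hv hv'
  obtain ⟨c, hc, hcw⟩ := hfat hw hw'
  have h3 : 2 < (H.fatNeighborSet x).ncard := (Set.two_lt_ncard_iff).mpr ⟨a, b, c, ha, hb, hc,
    (hdisj hu hv hu' hv' hne.1).ne_of_mem hau hbv,
    (hdisj hu hw hu' hw' hne.2.1).ne_of_mem hau hcw,
    (hdisj hv hw hv' hw' hne.2.2).ne_of_mem hbv hcw⟩
  rw [← fatDeg_eq_ncard, ht.adj_and_commonFat_eq_zero_and_fatDeg_eq_two.2.2] at h3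
  omega

lemma fatNeighborSet_eq_of_inner_eq_neg_one_of_ne [Finite V] (ht : TwinPair H ψ x y)
    {z₁ w p₀ p₁ p₂ p₃ : V} (hz₁ : H.IsSlim z₁) (h₁ : ⟪ψ x, ψ z₁⟫ = -1)
    (hN₁ : H.fatNeighborSet z₁ = {p₀, p₁}) (hNx : H.fatNeighborSet x = {p₀, p₃})
    (hNy : H.fatNeighborSet y = {p₁, p₂}) (hw : H.IsSlim w) (hw' : ⟪ψ x, ψ w⟫ = -1)
    (hwz₁ : w ≠ z₁) : H.fatNeighborSet w = {p₃, p₂} := by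
  obtain ⟨a, b, ha, hb, hNw⟩ := ht.exists_fatNeighborSet_eq_pair hw hw'
  have hd := H.commonFat_eq_zero_iff.mp
    (ht.adj_and_commonFat_eq_zero_of_inner_eq_neg_one hz₁ hw hwz₁.symm h₁ hw').2
  rw [hN₁, hNw] at hd
  rw [hNx] at ha
  rw [hNy] at hb
  rcases ha with rfl | rfl
  · exact absurd hd (Set.not_disjoint_iff.mpr ⟨a, Set.mem_insert _ _, Set.mem_insert _ _⟩)
  rcases hb with rfl | rfl
  · exact absurd hd (Set.not_disjoint_iff.mpr
      ⟨b, Set.mem_insert_of_mem _ rfl, Set.mem_insert_of_mem _ rfl⟩)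
  exact hNw

lemma exists_eq_or_eq_of_inner_eq_neg_one [Finite V] (ht : TwinPair H ψ x y) {z₁ : V}
    (hz₁ : H.IsSlim z₁) (h₁ : ⟪ψ x, ψ z₁⟫ = -1) :
    ∃ z₂, H.IsSlim z₂ ∧ ⟪ψ x, ψ z₂⟫ = -1 ∧
      ∀ w, H.IsSlim w → ⟪ψ x, ψ w⟫ = -1 → w = z₁ ∨ w = z₂ := by
  by_cases h : ∃ w, H.IsSlim w ∧ ⟪ψ x, ψ w⟫ = -1 ∧ w ≠ z₁
  · obtain ⟨z₂, hz₂, h₂, hz₂₁⟩ := h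
    refine ⟨z₂, hz₂, h₂, fun w hw hw' => ?_⟩
    rcases ht.eq_or_eq_or_eq_of_inner_eq_neg_one hw hz₁ hz₂ hw' h₁ h₂ with h | h | h
    exacts [Or.inl h, Or.inr h, absurd h.symm hz₂₁]
  · push Not at h
    exact ⟨z₁, hz₁, h₁, fun w hw hw' => Or.inl (h w hw hw')⟩

lemma eq_or_eq_or_inner_eq_neg_one [Finite V] (ht : TwinPair H ψ x y) {z₁ : V}
    (hz₁ : H.IsSlim z₁) (h₁ : ⟪ψ x, ψ z₁⟫ = -1) (h0 : ∀ z, H.IsSlim z → ⟪ψ x, ψ z⟫ ≠ 0)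
    (hz : H.IsSlim z) : z = x ∨ z = y ∨ ⟪ψ x, ψ z⟫ = -1 := by
  rcases ht.inner_eq_neg_one_or_zero_or_one hz with h | h | h
  · exact .inr (.inr h)
  · exact absurd h (h0 z hz)
  · exact (ht.eq_or_eq_of_inner_eq_one hz₁ h₁ hz h).imp_right .inl

/-- The `p_i` are named after the fat vertices `f_i` of `𝔎`, and `x, z₁, y` and any other `w`
after its slim vertices `0, 1, 2, 3`. -/
lemma exists_fatNeighborSet_eq [Finite V] (ht : TwinPair H ψ x y) {z₁ : V}
    (hz₁ : H.IsSlim z₁) (h₁ : ⟪ψ x, ψ z₁⟫ = -1) :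
    ∃ p₀ p₁ p₂ p₃ : V, Function.Injective (![p₀, p₁, p₂, p₃] : ZMod 4 → V) ∧
      H.fatNeighborSet x = {p₀, p₃} ∧ H.fatNeighborSet z₁ = {p₁, p₀} ∧
      H.fatNeighborSet y = {p₂, p₁} ∧
      ∀ w, H.IsSlim w → ⟪ψ x, ψ w⟫ = -1 → w ≠ z₁ → H.fatNeighborSet w = {p₃, p₂} := by
  obtain ⟨-, hcxy, hdx⟩ := ht.adj_and_commonFat_eq_zero_and_fatDeg_eq_two
  obtain ⟨p₀, p₁, hp₀, hp₁, hN₁⟩ := ht.exists_fatNeighborSet_eq_pair hz₁ h₁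
  obtain ⟨p₃, hp₀₃, hNx⟩ := Set.exists_eq_pair_of_ncard_eq_two (s := H.fatNeighborSet x) hdx hp₀
  obtain ⟨p₂, hp₁₂, hNy⟩ := Set.exists_eq_pair_of_ncard_eq_two (s := H.fatNeighborSet y)
    ht.symm.adj_and_commonFat_eq_zero_and_fatDeg_eq_two.2.2 hp₁
  refine ⟨p₀, p₁, p₂, p₃, ?_, hNx, hN₁.trans (Set.pair_comm _ _), hNy.trans (Set.pair_comm _ _),
    fun w hw hw' hwz₁ => ht.fatNeighborSet_eq_of_inner_eq_neg_one_of_ne hz₁ h₁ hN₁ hNx hNy hw hw'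
      hwz₁⟩
  have hxy := (H.commonFat_eq_zero_iff.mp hcxy).ne_of_mem
  have hp₃ : p₃ ∈ H.fatNeighborSet x := hNx.ge (.inr rfl)
  have hp₂ : p₂ ∈ H.fatNeighborSet y := hNy.ge (.inr rfl)
  show Function.Injective ![p₀, p₁, p₂, p₃]
  simp only [Matrix.vecCons, Fin.cons_injective_iff]
  simp [hxy hp₀ hp₁, hxy hp₀ hp₂, hp₀₃, hp₁₂, (hxy hp₃ hp₁).symm, (hxy hp₃ hp₂).symm,
    Function.injective_of_subsingleton]

/-- The label `3` is dropped when `z₁` is the only slim vertex with `ψ z₁ = -ψ x`. -/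
lemma isInducedSubgraphOf_exampleA3tilde [Finite V] (ht : TwinPair H ψ x y) {z₁ : V}
    (hz₁ : H.IsSlim z₁) (h₁ : ⟪ψ x, ψ z₁⟫ = -1) (h0 : ∀ z, H.IsSlim z → ⟪ψ x, ψ z⟫ ≠ 0) :
    H.IsInducedSubgraphOf exampleA3tilde := by
  obtain ⟨p₀, p₁, p₂, p₃, hinj, hNx, hN₁, hNy, hN₂⟩ := ht.exists_fatNeighborSet_eq hz₁ h₁
  obtain ⟨z₂, hz₂, h₂, hneg⟩ := ht.exists_eq_or_eq_of_inner_eq_neg_one hz₁ h₁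
  have hslim : ∀ v, H.IsSlim v → v = x ∨ v = y ∨ v = z₁ ∨ v = z₂ := fun v hv => by
    rcases ht.eq_or_eq_or_inner_eq_neg_one hz₁ h₁ h0 hv with h | h | h
    exacts [.inl h, .inr (.inl h), .inr (.inr (hneg v hv h))]
  refine isInducedSubgraphOf_exampleA3tilde_of_labelling {i | i ≠ 3 ∨ z₂ ≠ z₁}
    ![x, z₁, y, z₂] ![p₀, p₁, p₂, p₃] ?_ ?_ hinj ?_ ?_ ?_
  · intro i _
    rcases ZMod.four_cases i with rfl | rfl | rfl | rfl
    exacts [ht.slim_left, hz₁, ht.slim_right, hz₂]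
  · intro j
    rcases ZMod.four_cases j with rfl | rfl | rfl | rfl
    exacts [(hNx.ge (.inl rfl)).1, (hNy.ge (.inr rfl)).1, (hNy.ge (.inl rfl)).1,
      (hNx.ge (.inr rfl)).1]
  · intro v hv
    rcases hslim v hv with rfl | rfl | rfl | rfl
    · exact ⟨0, .inl (by decide), rfl⟩
    · exact ⟨2, .inl (by decide), rfl⟩
    · exact ⟨1, .inl (by decide), rfl⟩
    · by_cases hv₁ : v = z₁
      · exact ⟨1, .inl (by decide), hv₁.symm⟩
      · exact ⟨3, .inr hv₁, rfl⟩
  · intro i hi j hj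
    rcases ZMod.four_cases i with rfl | rfl | rfl | rfl <;>
      rcases ZMod.four_cases j with rfl | rfl | rfl | rfl <;>
      simp +decide [H.graph.adj_comm y x, H.graph.adj_comm z₁ x, H.graph.adj_comm z₁ y,
        H.graph.adj_comm z₂ x, H.graph.adj_comm z₂ y, H.graph.adj_comm z₂ z₁,
        ht.adj_and_commonFat_eq_zero_and_fatDeg_eq_two.1, ht.not_adj_of_inner_eq_neg_one hz₁ h₁,
        ht.not_adj_of_inner_eq_neg_one hz₂ h₂] at hi hj ⊢ <;>
      exact (ht.adj_and_commonFat_eq_zero_of_inner_eq_neg_one hz₁ hz₂ (Ne.symm ‹_›) h₁ h₂).1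
  · intro i hi
    rcases ZMod.four_cases i with rfl | rfl | rfl | rfl <;> simp at hi ⊢
    exacts [hNx, hN₁, hNy, hN₂ z₂ hz₂ h₂ hi]

end TwinPair

end HoffmanGraph

/-- Lemma 4.5: the reduced representation of norm `3` of a fat indecomposable
`(-3)`-saturated Hoffman graph is injective on the slim vertices, unless the graph is
isomorphic to an induced Hoffman subgraph of the Hoffman graph of Example 4.2. -/
theorem reducedRep_injective_or_subgraph_of_exampleA3tilde {V : Type} [Fintype V]
    (H : HoffmanGraph V) (hfat : H.IsFatGraph) (hind : H.Indecomposable)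
    (hsat : H.IsSaturated (-3))
    {E : Type*} [NormedAddCommGroup E] [InnerProductSpace ℝ E]
    (ψ : V → E) (hψ : H.IsReducedRep 3 ψ) :
    (∀ x y, H.IsSlim x → H.IsSlim y → ψ x = ψ y → x = y) ∨
      H.IsInducedSubgraphOf HoffmanGraph.exampleA3tilde := by
  refine or_iff_not_imp_left.mpr fun hinj => ?_
  push Not at hinj
  obtain ⟨x, y, hx, hy, hxy, hne⟩ := hinj
  have ht : H.TwinPair ψ x y := ⟨hψ, hfat, hx, hy, hne, hxy, fun z hz => by
    by_cases hzx : z = x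
    · exact hψ.ne_zero_of_indecomposable hind hz hy (hzx ▸ hne.symm)
    · exact hψ.ne_zero_of_indecomposable hind hz hx (Ne.symm hzx)⟩
  obtain ⟨z₁, hz₁, h₁0, h₁1⟩ :=
    hsat.exists_inner_ne_zero_ne_one (by norm_num) hψ ht.inner_self_left hx ht.inner_self_left
  have h₁ : ⟪ψ x, ψ z₁⟫ = -1 := (ht.inner_eq_neg_one_or_zero_or_one hz₁).resolve_right
    (not_or.mpr ⟨h₁0, h₁1⟩)
  exact ht.isInducedSubgraphOf_exampleA3tilde hz₁ h₁ fun z hz => ht.inner_ne_zero hind hz₁ h₁ hz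
end
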